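/- Let Φ : S_{m,n} → S_{m',n'} be an affine bijection between the separable state spaces. Let ω_1 ≠ ω_2 be pure states in K_m, σ_1 ≠ σ_2 pure states in K_n, ρ_1, ρ_2, ρ_3 pure states in K_{m'}, and τ_1, τ_2, τ_3 pure states in K_{n'}. Then the four equations Φ(ω_1⊗σ_1) = ρ_1⊗τ_1, Φ(ω_1⊗σ_2) = ρ_1⊗τ_2, Φ(ω_2⊗σ_1) = ρ_2⊗τ_3, Φ(ω_2⊗σ_2) = ρ_3⊗τ_3 cannot all hold simultaneously. -/

import Mathlib

open scoped Kronecker ComplexOrder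

noncomputable section

/-- The vector state (rank-one projection onto `ℂx`) associated to a unit vector `x`. -/
def vecState {ι : Type*} [Fintype ι] (x : EuclideanSpace ℂ ι) : Matrix ι ι ℂ :=
  Matrix.of fun i j => x i * (starRingEnd ℂ) (x j)

/-- The state space of `B(ℂ^ι)`: density matrices. -/
def stateSet (ι : Type*) [Fintype ι] [DecidableEq ι] : Set (Matrix ι ι ℂ) :=
  {ρ | ρ.PosSemidef ∧ ρ.trace = 1}

/-- A pure state: rank-one projection onto the line spanned by a unit vector. -/
def IsPureState {ι : Type*} [Fintype ι] (ρ : Matrix ι ι ℂ) : Prop :=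
  ∃ x : EuclideanSpace ℂ ι, ‖x‖ = 1 ∧ ρ = vecState x

/-- The set of separable states on `B(ℂᵐ ⊗ ℂⁿ)`: convex combinations of product states. -/
def sepSet (m n : ℕ) : Set (Matrix (Fin m × Fin n) (Fin m × Fin n) ℂ) :=
  {ρ | ∃ (r : ℕ) (lam : Fin r → ℝ) (σ : Fin r → Matrix (Fin m) (Fin m) ℂ)
        (τ : Fin r → Matrix (Fin n) (Fin n) ℂ),
      (∀ i, 0 ≤ lam i) ∧ (∑ i, lam i) = 1 ∧
      (∀ i, σ i ∈ stateSet (Fin m)) ∧ (∀ i, τ i ∈ stateSet (Fin n)) ∧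
      ρ = ∑ i, lam i • (σ i ⊗ₖ τ i)}

/-- `Φ` maps `A` bijectively onto `B` and is affine on `A`. -/
def AffBijOn {E F' : Type*} [AddCommGroup E] [Module ℝ E] [AddCommGroup F'] [Module ℝ F']
    (Φ : E → F') (A : Set E) (B : Set F') : Prop :=
  Set.BijOn Φ A B ∧
    ∀ x ∈ A, ∀ y ∈ A, ∀ t : ℝ, 0 ≤ t → t ≤ 1 →
      Φ (t • x + (1 - t) • y) = t • Φ x + (1 - t) • Φ y

/-!
Write `|u⟩⟨u|` for `vecMulVec u (star u)`. If `|u⟩⟨u| ≠ |u'⟩⟨u'|` and `|v⟩⟨v| ≠ |v'⟩⟨v'|`, a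
separable state whose quadratic form vanishes wherever those of `|u⟩⟨u| ⊗ |v⟩⟨v|` and
`|u'⟩⟨u'| ⊗ |v'⟩⟨v'|` do lies on the segment between these two states: testing on product vectors
`y ⊗ z` with `y ⊥ u, z ⊥ v'` or `y ⊥ u', z ⊥ v` pins down every product term. No such rigidity
holds for `ωa ⊗ σ` and `ωb ⊗ σ`: the midpoint of `ωa = |u₁⟩⟨u₁|` and `ωb = |u₂⟩⟨u₂|` is also a
mixture of the pure states along `u₁ + u₂` and `u₁ - u₂`, which lie off `[ωa, ωb]`. An affine
bijection transports such decompositions, so `Φ` cannot map `ωa ⊗ σ` and `ωb ⊗ σ` to pure product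
states differing in both factors. For the four equations this gives `ρ₁ = ρ₂ ∨ τ₁ = τ₃` and
`ρ₁ = ρ₃ ∨ τ₂ = τ₃`; in each of the four cases two of the images coincide, against injectivity.
-/

open Matrix

section PureStates

variable {ι : Type*} [Fintype ι]

theorem isPureState_iff {ρ : Matrix ι ι ℂ} :
    IsPureState ρ ↔ ∃ u : ι → ℂ, star u ⬝ᵥ u = 1 ∧ ρ = vecMulVec u (star u) := by
  have key : ∀ x : EuclideanSpace ℂ ι, ‖x‖ = 1 ↔ star ⇑x ⬝ᵥ ⇑x = 1 := fun x => by
    have h : star ⇑x ⬝ᵥ ⇑x = ((‖x‖ ^ 2 : ℝ) : ℂ) := by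
      rw [dotProduct_comm, ← EuclideanSpace.inner_eq_star_dotProduct, inner_self_eq_norm_sq_to_K]
      push_cast; rfl
    rw [h, Complex.ofReal_eq_one, pow_eq_one_iff_of_nonneg (norm_nonneg x) two_ne_zero]
  constructor
  · rintro ⟨x, hx, rfl⟩
    exact ⟨x, (key x).1 hx, rfl⟩
  · rintro ⟨u, hu, rfl⟩
    exact ⟨WithLp.toLp 2 u, (key _).2 hu, rfl⟩

theorem vecMulVec_smul_self_star {u : ι → ℂ} {c : ℂ} (hu : star u ⬝ᵥ u = 1)
    (hcu : star (c • u) ⬝ᵥ (c • u) = 1) :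
    vecMulVec (c • u) (star (c • u)) = vecMulVec u (star u) := by
  have hc : c * star c = 1 := by
    simpa only [star_smul, smul_dotProduct, dotProduct_smul, hu, smul_eq_mul, mul_one] using hcu
  rw [star_smul, smul_vecMulVec, vecMulVec_smul, smul_smul, hc, one_smul]

theorem exists_orthogonal_of_vecMulVec_ne {u w : ι → ℂ} (hu : star u ⬝ᵥ u = 1)
    (hw : star w ⬝ᵥ w = 1) (hne : vecMulVec u (star u) ≠ vecMulVec w (star w)) :
    ∃ x, star w ⬝ᵥ x = 0 ∧ star u ⬝ᵥ x ≠ 0 := by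
  set c := star w ⬝ᵥ u
  have hwx : star w ⬝ᵥ (u - c • w) = 0 := by
    rw [dotProduct_sub, dotProduct_smul, hw, smul_eq_mul, mul_one, sub_self]
  refine ⟨u - c • w, hwx, fun hux => hne ?_⟩
  have hx : u - c • w = 0 := by
    rw [← dotProduct_star_self_eq_zero, star_sub, sub_dotProduct, hux, star_smul,
      smul_dotProduct, hwx, smul_zero, sub_zero]
  rw [sub_eq_zero.1 hx] at hu ⊢
  exact vecMulVec_smul_self_star hw hu

theorem star_dotProduct_vecMulVec_self_star_mulVec (u y : ι → ℂ) :
    star y ⬝ᵥ vecMulVec u (star u) *ᵥ y = star (star u ⬝ᵥ y) * (star u ⬝ᵥ y) := by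
  rw [vecMulVec_mulVec, op_smul_eq_smul, dotProduct_smul, smul_eq_mul, mul_comm,
    star_dotProduct]

variable [DecidableEq ι]

theorem vecMulVec_self_star_mem_stateSet {u : ι → ℂ} (hu : star u ⬝ᵥ u = 1) :
    vecMulVec u (star u) ∈ stateSet ι :=
  ⟨posSemidef_vecMulVec_self_star u, by rw [trace_vecMulVec, dotProduct_comm, hu]⟩

theorem IsPureState.mem_stateSet {ρ : Matrix ι ι ℂ} (hρ : IsPureState ρ) : ρ ∈ stateSet ι := by
  obtain ⟨u, hu, rfl⟩ := isPureState_iff.1 hρ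
  exact vecMulVec_self_star_mem_stateSet hu

theorem eq_vecMulVec_self_star_of_dotProduct_mulVec_eq_zero {A : Matrix ι ι ℂ}
    (hA : A ∈ stateSet ι) {u : ι → ℂ} (hu : star u ⬝ᵥ u = 1)
    (h : ∀ y, star u ⬝ᵥ y = 0 → star y ⬝ᵥ A *ᵥ y = 0) :
    A = vecMulVec u (star u) := by
  have hAy : ∀ y, A *ᵥ y = (star u ⬝ᵥ y) • A *ᵥ u := fun y => by
    have hy : star u ⬝ᵥ (y - (star u ⬝ᵥ y) • u) = 0 := by
      rw [dotProduct_sub, dotProduct_smul, hu, smul_eq_mul, mul_one, sub_self]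
    have := (hA.1.dotProduct_mulVec_zero_iff _).1 (h _ hy)
    rwa [mulVec_sub, mulVec_smul, sub_eq_zero] at this
  have hA_col : A = vecMulVec (A *ᵥ u) (star u) := ext_iff_mulVec.2 fun y => by
    rw [vecMulVec_mulVec, op_smul_eq_smul, ← hAy]
  have hA_row : A = vecMulVec u (star (A *ᵥ u)) := by
    conv_lhs => rw [← hA.1.isHermitian.eq, hA_col]
    rw [conjTranspose_vecMulVec, star_star]
  set c := star (A *ᵥ u) ⬝ᵥ u
  have hA_smul : A = c • vecMulVec u (star u) := by
    conv_lhs => rw [hA_col, hA_row, vecMulVec_mulVec, op_smul_eq_smul, smul_vecMulVec]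
  have hc : 1 = c := by
    simpa [hA.2, dotProduct_comm u, hu] using congrArg trace hA_smul
  rw [hA_smul, ← hc, one_smul]

end PureStates

theorem dotProduct_mulVec_eq_zero_of_sum_smul {ι r : Type*} [Fintype ι] [Fintype r]
    {lam : r → ℝ} {M : r → Matrix ι ι ℂ} (hlam : ∀ i, 0 ≤ lam i) (hM : ∀ i, (M i).PosSemidef)
    {x : ι → ℂ}
    (h : star x ⬝ᵥ (∑ i, lam i • M i) *ᵥ x = 0) {i : r} (hi : lam i ≠ 0) :
    star x ⬝ᵥ M i *ᵥ x = 0 := by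
  simp only [sum_mulVec, dotProduct_sum, smul_mulVec, dotProduct_smul] at h
  have hterm := (Finset.sum_eq_zero_iff_of_nonneg fun j _ =>
    smul_nonneg (hlam j) ((hM j).dotProduct_mulVec_nonneg x)).1 h i (Finset.mem_univ i)
  exact (smul_eq_zero.1 hterm).resolve_left hi

theorem dotProduct_mulVec_eq_zero_of_smul_add_smul {ι : Type*} [Fintype ι]
    {z z' : Matrix ι ι ℂ} (hz : z.PosSemidef) (hz' : z'.PosSemidef) {t : ℝ} (ht0 : 0 < t)
    (ht1 : t ≤ 1) {x : ι → ℂ}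
    (h : star x ⬝ᵥ (t • z + (1 - t) • z') *ᵥ x = 0) : star x ⬝ᵥ z *ᵥ x = 0 := by
  simp only [add_mulVec, smul_mulVec, dotProduct_add, dotProduct_smul] at h
  have h' := (add_eq_zero_iff_of_nonneg (smul_nonneg ht0.le (hz.dotProduct_mulVec_nonneg x))
    (smul_nonneg (sub_nonneg.2 ht1) (hz'.dotProduct_mulVec_nonneg x))).1 h
  exact (smul_eq_zero.1 h'.1).resolve_left ht0.ne'

section Kronecker

variable {R : Type*} [CommSemiring R] {l m n p : Type*}

def kronVec (y : m → R) (z : p → R) : m × p → R := fun i => y i.1 * z i.2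

theorem star_kronVec [StarRing R] (y : m → R) (z : p → R) :
    star (kronVec y z) = kronVec (star y) (star z) := by
  ext i
  simp [kronVec]

variable [Fintype m] [Fintype p]

theorem kronecker_mulVec_kronVec (A : Matrix l m R) (B : Matrix n p R) (y : m → R)
    (z : p → R) : (A ⊗ₖ B) *ᵥ kronVec y z = kronVec (A *ᵥ y) (B *ᵥ z) := by
  ext ⟨i, j⟩
  simp only [mulVec, dotProduct, kronVec, kroneckerMap_apply, Fintype.sum_prod_type,
    Finset.sum_mul_sum]
  exact Finset.sum_congr rfl fun _ _ => Finset.sum_congr rfl fun _ _ => by ring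

theorem kronVec_dotProduct_kronVec (a c : m → R) (b d : p → R) :
    kronVec a b ⬝ᵥ kronVec c d = (a ⬝ᵥ c) * (b ⬝ᵥ d) := by
  simp only [dotProduct, kronVec, Fintype.sum_prod_type, Finset.sum_mul_sum]
  exact Finset.sum_congr rfl fun _ _ => Finset.sum_congr rfl fun _ _ => by ring

theorem star_kronVec_dotProduct_kronecker_mulVec [StarRing R] (A : Matrix m m R)
    (B : Matrix p p R) (y : m → R) (z : p → R) :
    star (kronVec y z) ⬝ᵥ (A ⊗ₖ B) *ᵥ kronVec y z = (star y ⬝ᵥ A *ᵥ y) * (star z ⬝ᵥ B *ᵥ z) := by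
  rw [star_kronVec, kronecker_mulVec_kronVec, kronVec_dotProduct_kronVec]

theorem left_eq_of_kronecker_eq {A B : Matrix l n R} {C D : Matrix p p R} (hC : C.trace = 1)
    (hD : D.trace = 1) (h : A ⊗ₖ C = B ⊗ₖ D) : A = B := by
  ext i k
  have h' : A i k * C.trace = B i k * D.trace := by
    simp only [trace, diag, Finset.mul_sum]
    exact Finset.sum_congr rfl fun j _ => congrFun (congrFun h (i, j)) (k, j)
  rwa [hC, hD, mul_one, mul_one] at h'

theorem right_eq_of_kronecker_eq {A B : Matrix m m R} {C D : Matrix l n R} (hA : A.trace = 1)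
    (hB : B.trace = 1) (h : A ⊗ₖ C = B ⊗ₖ D) : C = D := by
  ext j k
  have h' : A.trace * C j k = B.trace * D j k := by
    simp only [trace, diag, Finset.sum_mul]
    exact Finset.sum_congr rfl fun i _ => congrFun (congrFun h (i, j)) (i, k)
  rwa [hA, hB, one_mul, one_mul] at h'

end Kronecker

section SepSet

variable {p q : ℕ}

theorem posSemidef_of_mem_sepSet {z : Matrix (Fin p × Fin q) (Fin p × Fin q) ℂ}
    (hz : z ∈ sepSet p q) : z.PosSemidef := by
  obtain ⟨r, lam, σ, τ, hlam, -, hσ, hτ, rfl⟩ := hz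
  exact posSemidef_sum _ fun i _ => ((hσ i).1.kronecker (hτ i).1).smul (hlam i)

theorem kronecker_mem_sepSet {σ : Matrix (Fin p) (Fin p) ℂ} {τ : Matrix (Fin q) (Fin q) ℂ}
    (hσ : σ ∈ stateSet (Fin p)) (hτ : τ ∈ stateSet (Fin q)) : σ ⊗ₖ τ ∈ sepSet p q :=
  ⟨1, fun _ => 1, fun _ => σ, fun _ => τ, fun _ => zero_le_one, by simp, fun _ => hσ,
    fun _ => hτ, by simp⟩

theorem convex_sepSet : Convex ℝ (sepSet p q) := by
  rintro _ ⟨r, lam, σ, τ, hlam, hsum, hσ, hτ, rfl⟩ _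
    ⟨r', lam', σ', τ', hlam', hsum', hσ', hτ', rfl⟩ a b ha hb hab
  refine ⟨r + r', Fin.append (a • lam) (b • lam'), Fin.append σ σ', Fin.append τ τ',
    (Fin.forall_fin_add _).2 ⟨fun i => ?_, fun i => ?_⟩, ?_, (Fin.forall_fin_add _).2 ⟨?_, ?_⟩,
    (Fin.forall_fin_add _).2 ⟨?_, ?_⟩, ?_⟩
  · simpa using mul_nonneg ha (hlam i)
  · simpa using mul_nonneg hb (hlam' i)
  · simp [Fin.sum_univ_add, ← Finset.mul_sum, hsum, hsum', hab]
  · simpa using hσ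
  · simpa using hσ'
  · simpa using hτ
  · simpa using hτ'
  · simp [Fin.sum_univ_add, Finset.smul_sum, smul_smul]

end SepSet

section Rigidity

variable {ι κ : Type*} [Fintype ι] [DecidableEq ι] [Fintype κ] [DecidableEq κ]

theorem kronecker_eq_of_dotProduct_mulVec_eq_zero {A : Matrix ι ι ℂ} {B : Matrix κ κ ℂ}
    (hA : A ∈ stateSet ι) (hB : B ∈ stateSet κ) {u u' : ι → ℂ} {v v' : κ → ℂ}
    (hu : star u ⬝ᵥ u = 1) (hu' : star u' ⬝ᵥ u' = 1)
    (hv : star v ⬝ᵥ v = 1) (hv' : star v' ⬝ᵥ v' = 1)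
    (huu' : vecMulVec u (star u) ≠ vecMulVec u' (star u'))
    (hvv' : vecMulVec v (star v) ≠ vecMulVec v' (star v'))
    (h : ∀ x, star x ⬝ᵥ (vecMulVec u (star u) ⊗ₖ vecMulVec v (star v)) *ᵥ x = 0 →
      star x ⬝ᵥ (vecMulVec u' (star u') ⊗ₖ vecMulVec v' (star v')) *ᵥ x = 0 →
      star x ⬝ᵥ (A ⊗ₖ B) *ᵥ x = 0) :
    A ⊗ₖ B = vecMulVec u (star u) ⊗ₖ vecMulVec v (star v) ∨
      A ⊗ₖ B = vecMulVec u' (star u') ⊗ₖ vecMulVec v' (star v') := by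
  have hprod : ∀ y z, (star u ⬝ᵥ y = 0 ∨ star v ⬝ᵥ z = 0) →
      (star u' ⬝ᵥ y = 0 ∨ star v' ⬝ᵥ z = 0) →
      (star y ⬝ᵥ A *ᵥ y) * (star z ⬝ᵥ B *ᵥ z) = 0 := by
    intro y z h₁ h₂
    rw [← star_kronVec_dotProduct_kronecker_mulVec]
    apply h <;> simp only [star_kronVec_dotProduct_kronecker_mulVec,
      star_dotProduct_vecMulVec_self_star_mulVec]
    · rcases h₁ with h₁ | h₁ <;> simp [h₁]
    · rcases h₂ with h₂ | h₂ <;> simp [h₂]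
  have dichotomy : ∀ {u₀ : ι → ℂ} {v₀ : κ → ℂ}, star u₀ ⬝ᵥ u₀ = 1 → star v₀ ⬝ᵥ v₀ = 1 →
      (∀ y z, star u₀ ⬝ᵥ y = 0 → star v₀ ⬝ᵥ z = 0 →
        (star y ⬝ᵥ A *ᵥ y) * (star z ⬝ᵥ B *ᵥ z) = 0) →
      A = vecMulVec u₀ (star u₀) ∨ B = vecMulVec v₀ (star v₀) := by
    intro u₀ v₀ hu₀ hv₀ H
    by_contra! hne
    obtain ⟨y, hy, hAy⟩ : ∃ y, star u₀ ⬝ᵥ y = 0 ∧ star y ⬝ᵥ A *ᵥ y ≠ 0 := by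
      by_contra! hA'
      exact hne.1 (eq_vecMulVec_self_star_of_dotProduct_mulVec_eq_zero hA hu₀ hA')
    obtain ⟨z, hz, hBz⟩ : ∃ z, star v₀ ⬝ᵥ z = 0 ∧ star z ⬝ᵥ B *ᵥ z ≠ 0 := by
      by_contra! hB'
      exact hne.2 (eq_vecMulVec_self_star_of_dotProduct_mulVec_eq_zero hB hv₀ hB')
    exact mul_ne_zero hAy hBz (H y z hy hz)
  rcases dichotomy hu hv' fun y z hy hz => hprod y z (.inl hy) (.inr hz) with hAu | hBv' <;>
    rcases dichotomy hu' hv fun y z hy hz => hprod y z (.inr hz) (.inl hy) with hAu' | hBv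
  · exact absurd (hAu.symm.trans hAu') huu'
  · exact .inl (by rw [hAu, hBv])
  · exact .inr (by rw [hAu', hBv'])
  · exact absurd (hBv.symm.trans hBv') hvv'

theorem mem_segment_of_dotProduct_mulVec_eq_zero {p q : ℕ}
    {z : Matrix (Fin p × Fin q) (Fin p × Fin q) ℂ} (hz : z ∈ sepSet p q)
    {u u' : Fin p → ℂ} {v v' : Fin q → ℂ} (hu : star u ⬝ᵥ u = 1) (hu' : star u' ⬝ᵥ u' = 1)
    (hv : star v ⬝ᵥ v = 1) (hv' : star v' ⬝ᵥ v' = 1)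
    (huu' : vecMulVec u (star u) ≠ vecMulVec u' (star u'))
    (hvv' : vecMulVec v (star v) ≠ vecMulVec v' (star v'))
    (h : ∀ x, star x ⬝ᵥ (vecMulVec u (star u) ⊗ₖ vecMulVec v (star v)) *ᵥ x = 0 →
      star x ⬝ᵥ (vecMulVec u' (star u') ⊗ₖ vecMulVec v' (star v')) *ᵥ x = 0 →
      star x ⬝ᵥ z *ᵥ x = 0) :
    z ∈ segment ℝ (vecMulVec u (star u) ⊗ₖ vecMulVec v (star v))
      (vecMulVec u' (star u') ⊗ₖ vecMulVec v' (star v')) := by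
  obtain ⟨r, lam, σ, τ, hlam, hsum, hσ, hτ, rfl⟩ := hz
  have hterm : ∀ i, lam i ≠ 0 → σ i ⊗ₖ τ i ∈ segment ℝ
      (vecMulVec u (star u) ⊗ₖ vecMulVec v (star v))
      (vecMulVec u' (star u') ⊗ₖ vecMulVec v' (star v')) := fun i hi => by
    rcases kronecker_eq_of_dotProduct_mulVec_eq_zero (hσ i) (hτ i) hu hu' hv hv' huu' hvv'
        fun x h₁ h₂ => dotProduct_mulVec_eq_zero_of_sum_smul hlam
          (fun j => (hσ j).1.kronecker (hτ j).1) (h x h₁ h₂) hi with h | h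
    · exact h ▸ left_mem_segment ℝ _ _
    · exact h ▸ right_mem_segment ℝ _ _
  rw [← Finset.sum_filter_of_ne (p := fun i => lam i ≠ 0) fun i _ hi h0 => hi (by simp [h0])]
  exact (convex_segment _ _).sum_mem (fun i _ => hlam i) (by rwa [Finset.sum_filter_ne_zero])
    fun i hi => hterm i (Finset.mem_filter.1 hi).2

end Rigidity

section Mixture

variable {ι : Type*} [Fintype ι]

theorem smul_vecMulVec_add_notMem_segment {u₁ u₂ : ι → ℂ} (hu₁ : star u₁ ⬝ᵥ u₁ = 1)
    (hu₂ : star u₂ ⬝ᵥ u₂ = 1) (hne : vecMulVec u₁ (star u₁) ≠ vecMulVec u₂ (star u₂))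
    {c : ℝ} (hc : c ≠ 0) :
    c • vecMulVec (u₁ + u₂) (star (u₁ + u₂)) ∉
      segment ℝ (vecMulVec u₁ (star u₁)) (vecMulVec u₂ (star u₂)) := by
  rintro ⟨a, b, -, -, -, hab⟩
  obtain ⟨x, hx₂, hx₁⟩ := exists_orthogonal_of_vecMulVec_ne hu₁ hu₂ hne
  have hmul := congrArg (· *ᵥ x) hab
  simp only [add_mulVec, smul_mulVec, vecMulVec_mulVec, op_smul_eq_smul, star_add,
    add_dotProduct, hx₂, add_zero, zero_smul, smul_zero] at hmul
  rw [smul_comm a, smul_comm c] at hmul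
  have hcu : c • (u₁ + u₂) = a • u₁ := (smul_right_injective _ hx₁ hmul).symm
  have hu₂_eq : u₂ = ((c⁻¹ * a - 1 : ℝ) : ℂ) • u₁ := by
    rw [Complex.coe_smul, sub_smul, mul_smul, ← hcu, inv_smul_smul₀ hc, one_smul,
      add_sub_cancel_left]
  rw [hu₂_eq] at hu₂ hne
  exact hne (vecMulVec_smul_self_star hu₁ hu₂).symm

variable [DecidableEq ι]

theorem inv_smul_vecMulVec_self_star_mem_stateSet {g : ι → ℂ} {N : ℝ}
    (hN : star g ⬝ᵥ g = N) (hN0 : N ≠ 0) : N⁻¹ • vecMulVec g (star g) ∈ stateSet ι := by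
  refine ⟨(posSemidef_vecMulVec_self_star g).smul (inv_nonneg.2 ?_), ?_⟩
  · exact_mod_cast hN ▸ dotProduct_star_self_nonneg g
  · rw [trace_smul, trace_vecMulVec, dotProduct_comm, hN, Complex.real_smul,
      ← Complex.ofReal_mul, inv_mul_cancel₀ hN0, Complex.ofReal_one]

theorem exists_mixture_notMem_segment {u₁ u₂ : ι → ℂ} (hu₁ : star u₁ ⬝ᵥ u₁ = 1)
    (hu₂ : star u₂ ⬝ᵥ u₂ = 1) (hne : vecMulVec u₁ (star u₁) ≠ vecMulVec u₂ (star u₂)) :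
    ∃ ω ∈ stateSet ι, ∃ ω' ∈ stateSet ι, ∃ t : ℝ, 0 < t ∧ t ≤ 1 ∧
      t • ω + (1 - t) • ω' =
        (2⁻¹ : ℝ) • vecMulVec u₁ (star u₁) + (2⁻¹ : ℝ) • vecMulVec u₂ (star u₂) ∧
      ω ∉ segment ℝ (vecMulVec u₁ (star u₁)) (vecMulVec u₂ (star u₂)) := by
  have hre : ∀ g : ι → ℂ, star g ⬝ᵥ g = ((star g ⬝ᵥ g).re : ℂ) := fun g =>
    Complex.eq_re_of_ofReal_le (r := 0) (by simp [dotProduct_star_self_nonneg g])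
  have hre_nonneg : ∀ g : ι → ℂ, 0 ≤ (star g ⬝ᵥ g).re := fun g =>
    (Complex.nonneg_iff.1 (dotProduct_star_self_nonneg g)).1
  have hre_ne_zero : ∀ g : ι → ℂ, g ≠ 0 → (star g ⬝ᵥ g).re ≠ 0 := fun g hg h0 =>
    hg (dotProduct_star_self_eq_zero.1 (by rw [hre, h0, Complex.ofReal_zero]))
  set N := (star (u₁ + u₂) ⬝ᵥ (u₁ + u₂)).re
  set M := (star (u₁ - u₂) ⬝ᵥ (u₁ - u₂)).re
  have hN : N ≠ 0 := hre_ne_zero _ fun h => hne <| by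
    rw [eq_neg_of_add_eq_zero_right h, star_neg, neg_vecMulVec, vecMulVec_neg, neg_neg]
  have hM : M ≠ 0 := hre_ne_zero _ fun h => hne <| by rw [sub_eq_zero.1 h]
  have hNM : N + M = 4 := by
    have : star (u₁ + u₂) ⬝ᵥ (u₁ + u₂) + star (u₁ - u₂) ⬝ᵥ (u₁ - u₂) = 4 := by
      simp only [star_add, star_sub, add_dotProduct, dotProduct_add, sub_dotProduct,
        dotProduct_sub, hu₁, hu₂]
      ring
    rw [← Complex.add_re, this]
    norm_num
  refine ⟨N⁻¹ • vecMulVec (u₁ + u₂) (star (u₁ + u₂)),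
    inv_smul_vecMulVec_self_star_mem_stateSet (hre _) hN,
    M⁻¹ • vecMulVec (u₁ - u₂) (star (u₁ - u₂)),
    inv_smul_vecMulVec_self_star_mem_stateSet (hre _) hM, N / 4,
    div_pos ((hre_nonneg _).lt_of_ne' hN) four_pos, by linarith [hre_nonneg (u₁ - u₂)], ?_,
    smul_vecMulVec_add_notMem_segment hu₁ hu₂ hne (inv_ne_zero hN)⟩
  -- `(u₁ + u₂)(u₁ + u₂)* + (u₁ - u₂)(u₁ - u₂)* = 2 (u₁u₁* + u₂u₂*)`
  rw [show 1 - N / 4 = M / 4 by linarith, smul_smul, smul_smul,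
    show N / 4 * N⁻¹ = 4⁻¹ by field_simp, show M / 4 * M⁻¹ = 4⁻¹ by field_simp]
  simp only [star_add, star_sub, add_vecMulVec, vecMulVec_add, sub_vecMulVec, vecMulVec_sub]
  module

end Mixture

theorem AffBijOn.mem_segment_of_map_mem_segment {E F : Type*} [AddCommGroup E] [Module ℝ E]
    [AddCommGroup F] [Module ℝ F] {Φ : E → F} {A : Set E} {B : Set F} (hΦ : AffBijOn Φ A B)
    (hA : Convex ℝ A) {x y z : E} (hx : x ∈ A) (hy : y ∈ A) (hz : z ∈ A)
    (h : Φ z ∈ segment ℝ (Φ x) (Φ y)) : z ∈ segment ℝ x y := by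
  obtain ⟨a, b, ha, hb, hab, hΦz⟩ := h
  obtain rfl : b = 1 - a := by linarith
  refine ⟨a, 1 - a, ha, hb, hab, hΦ.1.injOn (hA hx hy ha hb hab) hz ?_⟩
  rw [hΦ.2 x hx y hy a ha (by linarith), hΦz]

theorem AffBijOn.map_smul_add_smul_eq {E F : Type*} [AddCommGroup E] [Module ℝ E]
    [AddCommGroup F] [Module ℝ F] {Φ : E → F} {A : Set E} {B : Set F} (hΦ : AffBijOn Φ A B)
    {x x' y y' : E} (hx : x ∈ A) (hx' : x' ∈ A) (hy : y ∈ A) (hy' : y' ∈ A) {s t : ℝ}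
    (hs0 : 0 ≤ s) (hs1 : s ≤ 1) (ht0 : 0 ≤ t) (ht1 : t ≤ 1)
    (h : s • x + (1 - s) • x' = t • y + (1 - t) • y') :
    s • Φ x + (1 - s) • Φ x' = t • Φ y + (1 - t) • Φ y' := by
  rw [← hΦ.2 x hx x' hx' s hs0 hs1, h, hΦ.2 y hy y' hy' t ht0 ht1]

theorem AffBijOn.eq_or_eq_of_map_kronecker_eq {m n m' n' : ℕ}
    {Φ : Matrix (Fin m × Fin n) (Fin m × Fin n) ℂ →
      Matrix (Fin m' × Fin n') (Fin m' × Fin n') ℂ}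
    (hΦ : AffBijOn Φ (sepSet m n) (sepSet m' n')) {ωa ωb : Matrix (Fin m) (Fin m) ℂ}
    {σ : Matrix (Fin n) (Fin n) ℂ} (hωa : IsPureState ωa) (hωb : IsPureState ωb) (hω : ωa ≠ ωb)
    (hσ : IsPureState σ) {ρa ρb : Matrix (Fin m') (Fin m') ℂ} {τa τb : Matrix (Fin n') (Fin n') ℂ}
    (hρa : IsPureState ρa) (hρb : IsPureState ρb) (hτa : IsPureState τa) (hτb : IsPureState τb)
    (ha : Φ (ωa ⊗ₖ σ) = ρa ⊗ₖ τa) (hb : Φ (ωb ⊗ₖ σ) = ρb ⊗ₖ τb) : ρa = ρb ∨ τa = τb := by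
  by_contra! hne
  obtain ⟨u₁, hu₁, rfl⟩ := isPureState_iff.1 hωa
  obtain ⟨u₂, hu₂, rfl⟩ := isPureState_iff.1 hωb
  obtain ⟨u, hu, rfl⟩ := isPureState_iff.1 hρa
  obtain ⟨u', hu', rfl⟩ := isPureState_iff.1 hρb
  obtain ⟨v, hv, rfl⟩ := isPureState_iff.1 hτa
  obtain ⟨v', hv', rfl⟩ := isPureState_iff.1 hτb
  obtain ⟨ω, hω, ω', hω', t, ht0, ht1, hmix, hωseg⟩ :=
    exists_mixture_notMem_segment hu₁ hu₂ hω
  have hσs := hσ.mem_stateSet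
  have hsep : ∀ {κ}, κ ∈ stateSet (Fin m) → κ ⊗ₖ σ ∈ sepSet m n :=
    fun hκ => kronecker_mem_sepSet hκ hσs
  have hsep₁ := hsep (vecMulVec_self_star_mem_stateSet hu₁)
  have hsep₂ := hsep (vecMulVec_self_star_mem_stateSet hu₂)
  have half : (1 - 2⁻¹ : ℝ) = 2⁻¹ := by norm_num
  have hΦmix := hΦ.map_smul_add_smul_eq (t := 2⁻¹) (hsep hω) (hsep hω') hsep₁ hsep₂ ht0.le ht1
    (by norm_num) (by norm_num) (by simp only [half, ← smul_kronecker, ← add_kronecker, hmix])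
  rw [ha, hb, half] at hΦmix
  have hΦω := hΦ.1.mapsTo (hsep hω)
  have hseg := mem_segment_of_dotProduct_mulVec_eq_zero hΦω hu hu' hv hv' hne.1 hne.2
    fun x h₁ h₂ => dotProduct_mulVec_eq_zero_of_smul_add_smul (posSemidef_of_mem_sepSet hΦω)
      (posSemidef_of_mem_sepSet (hΦ.1.mapsTo (hsep hω'))) ht0 ht1
      (by simp [hΦmix, add_mulVec, smul_mulVec, h₁, h₂])
  rw [← ha, ← hb] at hseg
  obtain ⟨a, b, ha₀, hb₀, hab, hω_eq⟩ :=
    hΦ.mem_segment_of_map_mem_segment convex_sepSet hsep₁ hsep₂ (hsep hω) hseg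
  exact hωseg ⟨a, b, ha₀, hb₀, hab, left_eq_of_kronecker_eq hσs.2 hσs.2 <| by
    rw [add_kronecker, smul_kronecker, smul_kronecker, hω_eq]⟩

/-- For an affine isomorphism `Φ : S_{m,n} → S_{m',n'}`, the four displayed equations on
products of pure states cannot hold simultaneously. -/
theorem four_equations_impossible {m n m' n' : ℕ}
    (Φ : Matrix (Fin m × Fin n) (Fin m × Fin n) ℂ →
      Matrix (Fin m' × Fin n') (Fin m' × Fin n') ℂ)
    (hΦ : AffBijOn Φ (sepSet m n) (sepSet m' n'))
    (ω₁ ω₂ : Matrix (Fin m) (Fin m) ℂ) (hω₁ : IsPureState ω₁) (hω₂ : IsPureState ω₂)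
    (hω : ω₁ ≠ ω₂)
    (σ₁ σ₂ : Matrix (Fin n) (Fin n) ℂ) (hσ₁ : IsPureState σ₁) (hσ₂ : IsPureState σ₂)
    (hσ : σ₁ ≠ σ₂)
    (ρ₁ ρ₂ ρ₃ : Matrix (Fin m') (Fin m') ℂ)
    (hρ₁ : IsPureState ρ₁) (hρ₂ : IsPureState ρ₂) (hρ₃ : IsPureState ρ₃)
    (τ₁ τ₂ τ₃ : Matrix (Fin n') (Fin n') ℂ)
    (hτ₁ : IsPureState τ₁) (hτ₂ : IsPureState τ₂) (hτ₃ : IsPureState τ₃) :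
    ¬ (Φ (ω₁ ⊗ₖ σ₁) = ρ₁ ⊗ₖ τ₁ ∧ Φ (ω₁ ⊗ₖ σ₂) = ρ₁ ⊗ₖ τ₂ ∧
       Φ (ω₂ ⊗ₖ σ₁) = ρ₂ ⊗ₖ τ₃ ∧ Φ (ω₂ ⊗ₖ σ₂) = ρ₃ ⊗ₖ τ₃) := by
  rintro ⟨h₁₁, h₁₂, h₂₁, h₂₂⟩
  have hinj : ∀ {ω ω' σ σ'}, IsPureState ω → IsPureState ω' → IsPureState σ → IsPureState σ' →
      Φ (ω ⊗ₖ σ) = Φ (ω' ⊗ₖ σ') → ω = ω' ∧ σ = σ' := fun hω hω' hσ hσ' h => by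
    have h' := hΦ.1.injOn (kronecker_mem_sepSet hω.mem_stateSet hσ.mem_stateSet)
      (kronecker_mem_sepSet hω'.mem_stateSet hσ'.mem_stateSet) h
    exact ⟨left_eq_of_kronecker_eq hσ.mem_stateSet.2 hσ'.mem_stateSet.2 h',
      right_eq_of_kronecker_eq hω.mem_stateSet.2 hω'.mem_stateSet.2 h'⟩
  rcases hΦ.eq_or_eq_of_map_kronecker_eq hω₁ hω₂ hω hσ₁ hρ₁ hρ₂ hτ₁ hτ₃ h₁₁ h₂₁ with rfl | rfl <;>
    rcases hΦ.eq_or_eq_of_map_kronecker_eq hω₁ hω₂ hω hσ₂ hρ₁ hρ₃ hτ₂ hτ₃ h₁₂ h₂₂ with rfl | rfl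
  · exact hσ (hinj hω₂ hω₂ hσ₁ hσ₂ (h₂₁.trans h₂₂.symm)).2
  · exact hω (hinj hω₁ hω₂ hσ₂ hσ₁ (h₁₂.trans h₂₁.symm)).1
  · exact hω (hinj hω₁ hω₂ hσ₁ hσ₂ (h₁₁.trans h₂₂.symm)).1
  · exact hσ (hinj hω₁ hω₁ hσ₁ hσ₂ (h₁₁.trans h₁₂.symm)).2

end
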